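/- Let W₁ be the unique nonempty compact subset of ℝ with W₁ = [−σ², −σ³] ∪ g(W₁), where g(x) = σ⁴x + σ⁴ + σ². Then for all y ∈ ℝ, the inverse Fourier transform f₁(y) = ∫_{W₁} exp(2πi x y) dx is given by the absolutely convergent series f₁(y) = − Σ_{n=0}^{∞} σ^{4n+1} · exp(−πi(2σ + 2σ^{4n} + σ^{4n+1})y) · sinc(π σ^{4n+1} y), where sinc(z) = sin(z)/z for z ≠ 0 and sinc(0) = 1. In particular, f₁(0) = τ/√5 = (τ+2)/5, which is the total Lebesgue measure of W₁. -/

import Mathlib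

/-!
The map `g x = σ⁴ x + σ⁴ + σ²` is the affine contraction `x ↦ -σ + σ⁴ (x + σ)` towards `-σ`.
Unwinding `W₁ = K ∪ g(W₁)`, a point of `W₁` lies either in some `gⁿ(K)` or in `gⁿ(W₁)` for
every `n`, and in the latter case it is the fixed point. Hence `W₁` is the disjoint union of the
intervals `gⁿ(K) = [-σ - σ⁴ⁿ, -σ - σ⁴ⁿ⁺²]` and the null set `{-σ}`, so its Fourier integral is
the sum of the explicit integrals over these intervals, each a phase times a sinc. The terms
are dominated by `|σ|⁴ⁿ⁺¹`, and at `y = 0` they sum to `-σ / (1 - σ⁴) = (τ + 2) / 5`.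
-/

open Set Filter Topology MeasureTheory Real Complex

section Attractor

variable {X : Type*} [MetricSpace X] {g : X → X} {c : ℝ} {p : X}

theorem dist_iterate_le_pow_mul (hc : 0 ≤ c) (hg : ∀ x, dist (g x) p ≤ c * dist x p)
    (n : ℕ) (x : X) : dist (g^[n] x) p ≤ c ^ n * dist x p := by
  induction n with
  | zero => simp
  | succ n ih =>
    rw [Function.iterate_succ_apply', pow_succ', mul_assoc]
    exact (hg _).trans (mul_le_mul_of_nonneg_left ih hc)

theorem tendsto_iterate_of_dist_le_mul (hc0 : 0 ≤ c) (hc1 : c < 1)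
    (hg : ∀ x, dist (g x) p ≤ c * dist x p) (x : X) :
    Tendsto (fun n ↦ g^[n] x) atTop (𝓝 p) := by
  rw [tendsto_iff_dist_tendsto_zero]
  refine squeeze_zero (fun _ ↦ dist_nonneg) (dist_iterate_le_pow_mul hc0 hg · x) ?_
  simpa using (tendsto_pow_atTop_nhds_zero_of_lt_one hc0 hc1).mul_const (dist x p)

theorem subset_singleton_of_subset_image (hc0 : 0 ≤ c) (hc1 : c < 1)
    (hg : ∀ x, dist (g x) p ≤ c * dist x p) {S : Set X} (hS : Bornology.IsBounded S)
    (hSg : S ⊆ g '' S) : S ⊆ {p} := by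
  have hiter : ∀ n, S ⊆ g^[n] '' S := by
    intro n
    induction n with
    | zero => simp
    | succ n ih =>
      rw [Function.iterate_succ, image_comp]
      exact ih.trans (image_mono hSg)
  obtain ⟨R, hR⟩ := hS.subset_closedBall p
  intro x hx
  have hbound : ∀ n, dist x p ≤ c ^ n * R := fun n ↦ by
    obtain ⟨w, hw, rfl⟩ := hiter n hx
    exact (dist_iterate_le_pow_mul hc0 hg n w).trans
      (mul_le_mul_of_nonneg_left (hR hw) (pow_nonneg hc0 n))
  have hlim : Tendsto (fun n ↦ c ^ n * R) atTop (𝓝 0) := by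
    simpa using (tendsto_pow_atTop_nhds_zero_of_lt_one hc0 hc1).mul_const R
  exact dist_le_zero.mp (ge_of_tendsto' hlim hbound)

theorem eq_iUnion_image_iterate_union_singleton (hc0 : 0 ≤ c) (hc1 : c < 1)
    (hg : ∀ x, dist (g x) p ≤ c * dist x p) {K W : Set X} (hW : IsCompact W)
    (hne : W.Nonempty) (hWK : W = K ∪ g '' W) : W = (⋃ n, g^[n] '' K) ∪ {p} := by
  have hgW : MapsTo g W W := mapsTo_iff_image_subset.mpr (subset_union_right.trans hWK.ge)
  have hpieces : ∀ n, g^[n] '' K ⊆ W := fun n ↦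
    ((hgW.iterate n).mono_left (subset_union_left.trans hWK.ge)).image_subset
  have hp : p ∈ W := by
    obtain ⟨x, hx⟩ := hne
    exact hW.isClosed.mem_of_tendsto (tendsto_iterate_of_dist_le_mul hc0 hc1 hg x)
      (Eventually.of_forall fun n ↦ hgW.iterate n hx)
  refine Subset.antisymm ?_ (union_subset (iUnion_subset hpieces) (singleton_subset_iff.mpr hp))
  -- the part of `W` outside the pieces is mapped onto itself, hence collapses to `p`
  have hrest : W \ ⋃ n, g^[n] '' K ⊆ g '' (W \ ⋃ n, g^[n] '' K) := by
    rintro x ⟨hxW, hxK⟩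
    rw [hWK] at hxW
    rcases hxW with hx | ⟨w, hw, rfl⟩
    · exact absurd (mem_iUnion.mpr ⟨0, by simpa using hx⟩) hxK
    · refine ⟨w, ⟨hw, fun hwK ↦ hxK ?_⟩, rfl⟩
      obtain ⟨n, k, hk, rfl⟩ := mem_iUnion.mp hwK
      exact mem_iUnion.mpr ⟨n + 1, k, hk, Function.iterate_succ_apply' g n k⟩
  have := subset_singleton_of_subset_image hc0 hc1 hg (hW.isBounded.subset sdiff_subset) hrest
  intro x hx
  by_cases hxK : x ∈ ⋃ n, g^[n] '' K
  · exact Or.inl hxK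
  · exact Or.inr (this ⟨hx, hxK⟩)

end Attractor

section AffineContraction

variable {g : ℝ → ℝ} {c p : ℝ}

theorem iterate_eq_of_forall_eq_affine (hg : ∀ x, g x = p + c * (x - p)) (n : ℕ) (x : ℝ) :
    g^[n] x = p + c ^ n * (x - p) := by
  induction n with
  | zero => simp
  | succ n ih => rw [Function.iterate_succ_apply', hg, ih]; ring

theorem image_iterate_Icc_of_affine (hg : ∀ x, g x = p + c * (x - p)) (hc : 0 < c) (n : ℕ)
    (u v : ℝ) : g^[n] '' Icc u v = Icc (p + c ^ n * (u - p)) (p + c ^ n * (v - p)) := by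
  have : g^[n] = fun x ↦ c ^ n * x + (p - c ^ n * p) := by
    funext x; rw [iterate_eq_of_forall_eq_affine hg]; ring
  rw [this, image_affine_Icc' (pow_pos hc n)]
  congr 1 <;> ring

theorem pairwise_disjoint_image_iterate_Icc (hg : ∀ x, g x = p + c * (x - p)) (hc0 : 0 < c)
    (hc1 : c < 1) {u v : ℝ} (huv : u ≤ v) (hvgu : v < g u) :
    Pairwise (Function.onFun Disjoint fun n ↦ g^[n] '' Icc u v) := by
  rw [hg] at hvgu
  have hup : u < p := by nlinarith
  refine (pairwise_disjoint_on _).mpr fun m n hmn ↦ ?_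
  obtain ⟨k, rfl⟩ := Nat.exists_eq_add_of_lt hmn
  have hck : c ^ (k + 1) ≤ c := pow_le_of_le_one hc0.le hc1.le k.succ_ne_zero
  have hgap : c ^ m * (v - p) < c ^ (m + k + 1) * (u - p) := by
    rw [add_assoc, pow_add, mul_assoc]
    refine mul_lt_mul_of_pos_left ?_ (pow_pos hc0 m)
    nlinarith
  simp only [image_iterate_Icc_of_affine hg hc0]
  exact disjoint_left.mpr fun x hxm hxn ↦ absurd (hxm.2.trans_lt (by linarith)) hxn.1.not_gt

end AffineContraction

theorem Real.mul_sinc (x : ℝ) : x * sinc x = Real.sin x := by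
  rcases eq_or_ne x 0 with rfl | hx
  · simp
  · rw [sinc_of_ne_zero hx, mul_div_cancel₀ _ hx]

theorem integral_Icc_cexp_eq_sinc {u v : ℝ} (huv : u ≤ v) (y : ℝ) :
    ∫ x in Icc u v, cexp (2 * π * I * x * y) =
      ((v - u : ℝ) : ℂ) * cexp (((π * (u + v) * y : ℝ) : ℂ) * I) *
        (sinc (π * (v - u) * y) : ℂ) := by
  rcases eq_or_ne y 0 with rfl | hy
  · simp [Measure.real_def, huv]
  have hc : 2 * π * I * y ≠ 0 := by simp [hy, Real.pi_ne_zero]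
  set θ := π * (v - u) * y
  set m := π * (u + v) * y
  have hv : cexp (2 * π * I * y * v) = cexp (m * I) * cexp (θ * I) := by
    rw [← Complex.exp_add]; congr 1; push_cast [θ, m]; ring
  have hu : cexp (2 * π * I * y * u) = cexp (m * I) * cexp (-θ * I) := by
    rw [← Complex.exp_add]; congr 1; push_cast [θ, m]; ring
  have hsin : ((Real.sin θ : ℝ) : ℂ) = (v - u) * (π * y) * sinc θ := by
    rw [← Real.mul_sinc]; push_cast [θ]; ring
  rw [integral_Icc_eq_integral_Ioc, ← intervalIntegral.integral_of_le huv]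
  simp_rw [show ∀ x : ℝ, 2 * π * I * x * y = 2 * π * I * y * x from fun x ↦ by ring]
  rw [integral_exp_mul_complex hc, div_eq_iff hc, hv, hu, exp_mul_I (θ : ℂ), exp_mul_I (-θ : ℂ),
    Complex.cos_neg, Complex.sin_neg, ← ofReal_sin, hsin]
  push_cast
  ring

section GoldenWindow

open goldenRatio

theorem goldenConj_pow_four : ψ ^ 4 = 2 + 3 * ψ := by
  linear_combination (ψ ^ 2 + ψ + 2) * goldenConj_sq

theorem goldenConj_pow_four_pos : 0 < ψ ^ 4 :=
  (even_two_mul 2).pow_pos goldenConj_ne_zero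

theorem goldenConj_pow_four_lt_one : ψ ^ 4 < 1 := by
  have h : ψ ^ 4 = (ψ + 1) ^ 2 := by rw [← goldenConj_sq]; ring
  rw [h]
  nlinarith [neg_one_lt_goldenConj, goldenConj_neg]

-- the interval `σ⁴ⁿ [-σ², -σ³] + σ (σ⁴ⁿ - 1)`
def goldenPiece (n : ℕ) : Set ℝ := Icc (-ψ - ψ ^ (4 * n)) (-ψ - ψ ^ (4 * n + 2))

theorem goldenContraction_eq (x : ℝ) : ψ ^ 4 * x + ψ ^ 4 + ψ ^ 2 = -ψ + ψ ^ 4 * (x - -ψ) := by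
  linear_combination (-(ψ ^ 3 + ψ)) * goldenConj_sq

theorem image_iterate_goldenContraction (n : ℕ) :
    (fun x ↦ ψ ^ 4 * x + ψ ^ 4 + ψ ^ 2)^[n] '' Icc (-ψ ^ 2) (-ψ ^ 3) = goldenPiece n := by
  rw [image_iterate_Icc_of_affine goldenContraction_eq goldenConj_pow_four_pos, goldenPiece]
  simp only [← pow_mul]
  congr 1
  · linear_combination (-ψ ^ (4 * n)) * goldenConj_sq
  · linear_combination (-ψ ^ (4 * n) * ψ) * goldenConj_sq

theorem pairwise_disjoint_goldenPiece : Pairwise (Function.onFun Disjoint goldenPiece) := by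
  have h := pairwise_disjoint_image_iterate_Icc goldenContraction_eq goldenConj_pow_four_pos
    goldenConj_pow_four_lt_one (u := -ψ ^ 2) (v := -ψ ^ 3) ?_ ?_
  · simpa only [image_iterate_goldenContraction] using h
  all_goals nlinarith [goldenConj_sq, goldenConj_pow_four, goldenConj_neg, neg_one_lt_goldenConj]

theorem eq_iUnion_goldenPiece_union_singleton {W : Set ℝ} (hne : W.Nonempty) (hW : IsCompact W)
    (hWK : W = Icc (-ψ ^ 2) (-ψ ^ 3) ∪ (fun x ↦ ψ ^ 4 * x + ψ ^ 4 + ψ ^ 2) '' W) :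
    W = (⋃ n, goldenPiece n) ∪ {-ψ} := by
  have hdist : ∀ x, dist (ψ ^ 4 * x + ψ ^ 4 + ψ ^ 2) (-ψ) ≤ ψ ^ 4 * dist x (-ψ) := fun x ↦ by
    rw [goldenContraction_eq, Real.dist_eq, Real.dist_eq, add_sub_cancel_left, abs_mul,
      abs_of_pos goldenConj_pow_four_pos]
  simpa only [image_iterate_goldenContraction] using
    eq_iUnion_image_iterate_union_singleton goldenConj_pow_four_pos.le goldenConj_pow_four_lt_one
      hdist hW hne hWK

noncomputable def goldenTerm (y : ℝ) (n : ℕ) : ℂ :=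
  -(((ψ ^ (4 * n + 1) : ℝ)) : ℂ) *
    cexp (-(π : ℂ) * I * (((2 * ψ + 2 * ψ ^ (4 * n) + ψ ^ (4 * n + 1)) : ℝ) : ℂ) * (y : ℂ)) *
    ((sinc (π * ψ ^ (4 * n + 1) * y) : ℝ) : ℂ)

theorem integral_goldenPiece (y : ℝ) (n : ℕ) :
    ∫ x in goldenPiece n, cexp (2 * π * I * x * y) = goldenTerm y n := by
  have hlen : -ψ - ψ ^ (4 * n + 2) - (-ψ - ψ ^ (4 * n)) = -ψ ^ (4 * n + 1) := by
    linear_combination (-ψ ^ (4 * n)) * goldenConj_sq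
  have hmid : -ψ - ψ ^ (4 * n) + (-ψ - ψ ^ (4 * n + 2)) =
      -(2 * ψ + 2 * ψ ^ (4 * n) + ψ ^ (4 * n + 1)) := by
    linear_combination (-ψ ^ (4 * n)) * goldenConj_sq
  have hle : -ψ - ψ ^ (4 * n) ≤ -ψ - ψ ^ (4 * n + 2) := by
    have : 0 ≤ -ψ ^ (4 * n + 1) := by
      rw [pow_succ, pow_mul]
      nlinarith [pow_pos goldenConj_pow_four_pos n, goldenConj_neg]
    linarith
  rw [goldenPiece, integral_Icc_cexp_eq_sinc hle, hlen, hmid, goldenTerm,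
    show π * -ψ ^ (4 * n + 1) * y = -(π * ψ ^ (4 * n + 1) * y) by ring, sinc_neg]
  push_cast
  ring_nf

theorem hasSum_goldenTerm {W : Set ℝ} (hne : W.Nonempty) (hW : IsCompact W)
    (hWK : W = Icc (-ψ ^ 2) (-ψ ^ 3) ∪ (fun x ↦ ψ ^ 4 * x + ψ ^ 4 + ψ ^ 2) '' W) (y : ℝ) :
    HasSum (goldenTerm y) (∫ x in W, cexp (2 * π * I * x * y)) := by
  have hWU := eq_iUnion_goldenPiece_union_singleton hne hW hWK
  have hae : W =ᵐ[volume] ⋃ n, goldenPiece n :=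
    hWU ▸ union_ae_eq_left_of_ae_eq_empty (ae_eq_empty.mpr (measure_singleton _))
  have hint : IntegrableOn (fun x : ℝ ↦ cexp (2 * π * I * x * y)) (⋃ n, goldenPiece n) :=
    ((by fun_prop : Continuous fun x : ℝ ↦ cexp (2 * π * I * x * y)).continuousOn
      |>.integrableOn_compact hW).mono_set (hWU ▸ subset_union_left)
  rw [setIntegral_congr_set hae]
  simpa only [integral_goldenPiece] using
    hasSum_integral_iUnion (s := goldenPiece) (fun _ ↦ measurableSet_Icc)
      pairwise_disjoint_goldenPiece hint

theorem norm_goldenTerm_le (y : ℝ) (n : ℕ) : ‖goldenTerm y n‖ ≤ (ψ ^ 4) ^ n * |ψ| := by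
  have hexp : ‖cexp (-(π : ℂ) * I * (((2 * ψ + 2 * ψ ^ (4 * n) + ψ ^ (4 * n + 1)) : ℝ) : ℂ) *
      (y : ℂ))‖ = 1 := by
    rw [← Complex.norm_exp_ofReal_mul_I (-(π * (2 * ψ + 2 * ψ ^ (4 * n) + ψ ^ (4 * n + 1)) * y))]
    push_cast
    ring_nf
  rw [goldenTerm, norm_mul, norm_mul, norm_neg, hexp, mul_one, Complex.norm_real,
    Complex.norm_real, Real.norm_eq_abs, Real.norm_eq_abs, pow_succ, pow_mul, abs_mul,
    abs_of_pos (pow_pos goldenConj_pow_four_pos n)]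
  exact mul_le_of_le_one_right (by positivity) (abs_sinc_le_one _)

theorem summable_norm_goldenTerm (y : ℝ) : Summable fun n ↦ ‖goldenTerm y n‖ :=
  .of_nonneg_of_le (fun _ ↦ norm_nonneg _) (norm_goldenTerm_le y)
    ((summable_geometric_of_lt_one goldenConj_pow_four_pos.le
      goldenConj_pow_four_lt_one).mul_right _)

theorem goldenTerm_zero : goldenTerm 0 = fun n ↦ ((-ψ ^ (4 * n + 1) : ℝ) : ℂ) :=
  funext fun n ↦ by simp [goldenTerm]

theorem hasSum_neg_goldenConj_pow : HasSum (fun n : ℕ ↦ -ψ ^ (4 * n + 1)) ((φ + 2) / 5) := by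
  have h := (hasSum_geometric_of_lt_one goldenConj_pow_four_pos.le
    goldenConj_pow_four_lt_one).mul_left (-ψ)
  have hsum : -ψ * (1 - ψ ^ 4)⁻¹ = (φ + 2) / 5 := by
    rw [← one_sub_goldenRatio,
      mul_inv_eq_iff_eq_mul₀ (sub_ne_zero.mpr goldenConj_pow_four_lt_one.ne')]
    linear_combination ((3 - ψ) / 5) * goldenConj_pow_four - (3 / 5) * goldenConj_sq
  have hterm : (fun n : ℕ ↦ -ψ ^ (4 * n + 1)) = fun n ↦ -ψ * (ψ ^ 4) ^ n :=
    funext fun n ↦ by rw [pow_succ, pow_mul]; ring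
  rwa [hterm, ← hsum]

theorem goldenRatio_div_sqrt_five : φ / √5 = (φ + 2) / 5 := by
  have h5 : √5 ^ 2 = 5 := Real.sq_sqrt (by norm_num)
  rw [div_eq_div_iff (by positivity) (by norm_num)]
  linear_combination (-1 / 2 : ℝ) * h5

end GoldenWindow

/-- for the unique compact window `W₁` with
`W₁ = [−σ²,−σ³] ∪ g(W₁)`, `g(x) = σ⁴x + σ⁴ + σ²`, the inverse Fourier transform
`f₁(y) = ∫_{W₁} e^{2πixy} dx` is given by the absolutely convergent series
`f₁(y) = −Σₙ σ^{4n+1} e^{−πi(2σ+2σ^{4n}+σ^{4n+1})y} sinc(πσ^{4n+1}y)`,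
with `f₁(0) = τ/√5 = (τ+2)/5 = vol(W₁)`. -/
theorem stmt17
    (τ σ : ℝ) (hτ : τ = (1 + Real.sqrt 5) / 2) (hσ : σ = 1 - τ)
    (sinc : ℝ → ℝ) (hsinc0 : sinc 0 = 1)
    (hsinc : ∀ z : ℝ, z ≠ 0 → sinc z = Real.sin z / z)
    (W₁ : Set ℝ) (hW₁ne : W₁.Nonempty) (hW₁cp : IsCompact W₁)
    (hW₁ : W₁ = Icc (-σ ^ 2) (-σ ^ 3) ∪
      (fun x => σ ^ 4 * x + σ ^ 4 + σ ^ 2) '' W₁) :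
    (∀ y : ℝ,
      HasSum
        (fun n : ℕ => -(((σ ^ (4 * n + 1) : ℝ)) : ℂ) *
          Complex.exp (-(Real.pi : ℂ) * Complex.I *
            (((2 * σ + 2 * σ ^ (4 * n) + σ ^ (4 * n + 1)) : ℝ) : ℂ) * (y : ℂ)) *
          ((sinc (Real.pi * σ ^ (4 * n + 1) * y) : ℝ) : ℂ))
        (∫ x in W₁, Complex.exp (2 * Real.pi * Complex.I * (x : ℂ) * (y : ℂ))) ∧
      Summable
        (fun n : ℕ => ‖-(((σ ^ (4 * n + 1) : ℝ)) : ℂ) *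
          Complex.exp (-(Real.pi : ℂ) * Complex.I *
            (((2 * σ + 2 * σ ^ (4 * n) + σ ^ (4 * n + 1)) : ℝ) : ℂ) * (y : ℂ)) *
          ((sinc (Real.pi * σ ^ (4 * n + 1) * y) : ℝ) : ℂ)‖)) ∧
    (∫ x in W₁, Complex.exp (2 * Real.pi * Complex.I * (x : ℂ) * ((0 : ℝ) : ℂ))) =
      (((τ + 2) / 5 : ℝ) : ℂ) ∧
    τ / Real.sqrt 5 = (τ + 2) / 5 ∧
    (volume W₁).toReal = (τ + 2) / 5 := by
  obtain rfl : τ = goldenRatio := hτ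
  obtain rfl : σ = goldenConj := hσ.trans one_sub_goldenConj
  obtain rfl : sinc = Real.sinc := funext fun z ↦ by
    rcases eq_or_ne z 0 with rfl | hz
    · rw [hsinc0, sinc_zero]
    · rw [hsinc z hz, sinc_of_ne_zero hz]
  have hsum := hasSum_goldenTerm hW₁ne hW₁cp hW₁
  have hval : ∫ x in W₁, cexp (2 * π * I * x * ((0 : ℝ) : ℂ)) =
      (((goldenRatio + 2) / 5 : ℝ) : ℂ) :=
    (hsum 0).unique (goldenTerm_zero ▸ Complex.hasSum_ofReal.mpr hasSum_neg_goldenConj_pow)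
  refine ⟨fun y ↦ ⟨hsum y, summable_norm_goldenTerm y⟩, hval, goldenRatio_div_sqrt_five, ?_⟩
  rw [← Complex.ofReal_inj, ← hval]
  simp [Measure.real_def]
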